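/- Suppose M ∈ SL(n, ℚ_p) has two Iwasawa decompositions M = N₁A₁K₁ = N₂A₂K₂, where N₁, N₂ are unit upper triangular, A₁, A₂ are diagonal with determinant 1, and K₁, K₂ ∈ SL(n, ℤ_p). Then for every i ∈ {1,…,n}, the p-adic norms of the i-th diagonal entries of A₁ and A₂ agree: |(A₁)_{ii}|_p = |(A₂)_{ii}|_p. -/
import Mathlib

open Matrix Finset

private lemma iwasawa_aux_le (p : ℕ) [Fact p.Prime] (n : ℕ)
    (N₁ A₁ K₁ N₂ A₂ K₂ : Matrix (Fin n) (Fin n) ℚ_[p])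
    (hdec : N₁ * A₁ * K₁ = N₂ * A₂ * K₂)
    (hN₁d : ∀ i, N₁ i i = 1) (hN₁0 : ∀ i j : Fin n, j < i → N₁ i j = 0)
    (hA₁ : ∀ i j : Fin n, i ≠ j → A₁ i j = 0)
    (hK₁ : ∀ i j, ‖K₁ i j‖ ≤ 1) (hK₁det : K₁.det = 1)
    (hN₂d : ∀ i, N₂ i i = 1) (hN₂0 : ∀ i j : Fin n, j < i → N₂ i j = 0)
    (hA₂ : ∀ i j : Fin n, i ≠ j → A₂ i j = 0) (hA₂det : A₂.det = 1)
    (hK₂ : ∀ i j, ‖K₂ i j‖ ≤ 1) :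
    ∀ i, ‖A₁ i i‖ ≤ ‖A₂ i i‖ := by
  -- triangularity facts
  have hN₁tri : (N₁).BlockTriangular id := fun i j h => hN₁0 i j h
  have hN₂tri : (N₂).BlockTriangular id := fun i j h => hN₂0 i j h
  have hA₁tri : (A₁).BlockTriangular id := fun i j h => hA₁ i j (ne_of_gt h)
  have hA₂tri : (A₂).BlockTriangular id := fun i j h => hA₂ i j (ne_of_gt h)
  set B₁ := N₁ * A₁ with hB₁
  set B₂ := N₂ * A₂ with hB₂
  have hB₁tri : B₁.BlockTriangular id := hN₁tri.mul hA₁tri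
  have hB₂tri : B₂.BlockTriangular id := hN₂tri.mul hA₂tri
  have hN₂det : N₂.det = 1 := by
    rw [det_of_upperTriangular hN₂tri]
    simp [hN₂d]
  have hB₂det : B₂.det = 1 := by
    rw [hB₂, det_mul, hN₂det, hA₂det, one_mul]
  have hB₂unit : IsUnit B₂.det := by rw [hB₂det]; exact isUnit_one
  haveI : Invertible B₂ := invertibleOfIsUnitDet _ hB₂unit
  set T := B₂⁻¹ * B₁ with hT
  have hTtri : T.BlockTriangular id :=
    (blockTriangular_inv_of_blockTriangular hB₂tri).mul hB₁tri
  have hBT : B₂ * T = B₁ := by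
    rw [hT, ← mul_assoc, mul_nonsing_inv _ hB₂unit, one_mul]
  -- diagonal entries of B₁, B₂
  have hB₁diag : ∀ i, B₁ i i = A₁ i i := by
    intro i
    rw [hB₁, mul_apply]
    rw [Finset.sum_eq_single i (fun k _ hk => by rw [hA₁ k i (by exact hk), mul_zero])
      (fun h => absurd (mem_univ i) h)]
    rw [hN₁d, one_mul]
  have hB₂diag : ∀ i, B₂ i i = A₂ i i := by
    intro i
    rw [hB₂, mul_apply]
    rw [Finset.sum_eq_single i (fun k _ hk => by rw [hA₂ k i (by exact hk), mul_zero])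
      (fun h => absurd (mem_univ i) h)]
    rw [hN₂d, one_mul]
  -- key diagonal identity : A₂ i i * T i i = A₁ i i
  have hkey : ∀ i, A₂ i i * T i i = A₁ i i := by
    intro i
    have : (B₂ * T) i i = B₂ i i * T i i := by
      rw [mul_apply]
      refine Finset.sum_eq_single i ?_ (fun h => absurd (mem_univ i) h)
      intro k _ hk
      rcases lt_or_gt_of_ne hk with h | h
      · rw [hB₂tri (show (id k : Fin n) < id i from h), zero_mul]
      · rw [hTtri (show (id i : Fin n) < id k from h), mul_zero]
    rw [← hB₂diag, ← hB₁diag i, ← this, hBT]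
  -- T = K₂ * adjugate K₁
  have hKadj : K₁ * K₁.adjugate = 1 := by
    rw [mul_adjugate, hK₁det, one_smul]
  have hTK : T = K₂ * K₁.adjugate := by
    have h1 : B₁ = B₂ * (K₂ * K₁.adjugate) := by
      have h0 : B₁ * K₁ * K₁.adjugate = B₂ * K₂ * K₁.adjugate := by rw [hdec]
      rw [mul_assoc, mul_assoc] at h0
      rw [hKadj, mul_one] at h0
      rw [hB₁, h0, mul_assoc]
    rw [hT, h1, ← mul_assoc, nonsing_inv_mul _ hB₂unit, one_mul]
  -- integrality : ‖T i j‖ ≤ 1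
  have hTnorm : ∀ i j, ‖T i j‖ ≤ 1 := by
    intro i j
    set f : ℤ_[p] →+* ℚ_[p] := PadicInt.Coe.ringHom with hf
    set K₁' : Matrix (Fin n) (Fin n) ℤ_[p] := fun i j => ⟨K₁ i j, hK₁ i j⟩ with hK₁'
    set K₂' : Matrix (Fin n) (Fin n) ℤ_[p] := fun i j => ⟨K₂ i j, hK₂ i j⟩ with hK₂'
    have hmap₁ : f.mapMatrix K₁' = K₁ := by ext i j; rfl
    have hmap₂ : f.mapMatrix K₂' = K₂ := by ext i j; rfl
    have : f.mapMatrix (K₂' * K₁'.adjugate) = T := by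
      rw [_root_.map_mul, RingHom.map_adjugate, hmap₁, hmap₂, hTK]
    have h2 : T i j = ((K₂' * K₁'.adjugate) i j : ℚ_[p]) := by
      rw [← this]; rfl
    rw [h2, PadicInt.padic_norm_e_of_padicInt]
    exact PadicInt.norm_le_one _
  intro i
  calc ‖A₁ i i‖ = ‖A₂ i i * T i i‖ := by rw [hkey]
    _ = ‖A₂ i i‖ * ‖T i i‖ := norm_mul _ _
    _ ≤ ‖A₂ i i‖ * 1 := by
        exact mul_le_mul_of_nonneg_left (hTnorm i i) (norm_nonneg _)
    _ = ‖A₂ i i‖ := mul_one _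

/-- In any two Iwasawa decompositions of `M ∈ SL(n, ℚ_p)`, the p-adic norms of the
diagonal entries of the semisimple parts agree. -/
theorem stmt_3 (p : ℕ) [Fact p.Prime] (n : ℕ)
    (M N₁ A₁ K₁ N₂ A₂ K₂ : Matrix (Fin n) (Fin n) ℚ_[p])
    (hM : M.det = 1)
    (hdec₁ : M = N₁ * A₁ * K₁)
    (hN₁d : ∀ i, N₁ i i = 1) (hN₁0 : ∀ i j : Fin n, j < i → N₁ i j = 0)
    (hA₁ : ∀ i j : Fin n, i ≠ j → A₁ i j = 0) (hA₁det : A₁.det = 1)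
    (hK₁ : ∀ i j, ‖K₁ i j‖ ≤ 1) (hK₁det : K₁.det = 1)
    (hdec₂ : M = N₂ * A₂ * K₂)
    (hN₂d : ∀ i, N₂ i i = 1) (hN₂0 : ∀ i j : Fin n, j < i → N₂ i j = 0)
    (hA₂ : ∀ i j : Fin n, i ≠ j → A₂ i j = 0) (hA₂det : A₂.det = 1)
    (hK₂ : ∀ i j, ‖K₂ i j‖ ≤ 1) (hK₂det : K₂.det = 1) :
    ∀ i, ‖A₁ i i‖ = ‖A₂ i i‖ := by
  have hdec : N₁ * A₁ * K₁ = N₂ * A₂ * K₂ := hdec₁.symm.trans hdec₂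
  intro i
  exact le_antisymm
    (iwasawa_aux_le p n N₁ A₁ K₁ N₂ A₂ K₂ hdec hN₁d hN₁0 hA₁ hK₁ hK₁det
      hN₂d hN₂0 hA₂ hA₂det hK₂ i)
    (iwasawa_aux_le p n N₂ A₂ K₂ N₁ A₁ K₁ hdec.symm hN₂d hN₂0 hA₂ hK₂ hK₂det
      hN₁d hN₁0 hA₁ hA₁det hK₁ i)
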